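/- Let G be a mixed graph and A, B disjoint vertex sets. If a→c is a directed edge with a ∈ A, c ∉ A∪B, and c lies in district(B ∪ ch(B)), then A and B are connected by a pure-collider path. -/

import Mathlib

structure MixedGraph (V : Type*) where
  dir : V → V → Prop
  bi : V → V → Prop
  bi_symm : ∀ {a b : V}, bi a b → bi b a

namespace MixedGraph

variable {V : Type*}

/-- A single edge traversal: a directed edge traversed forwards (`a → b`),
a directed edge traversed backwards (`a ← b`), or a bi-directed edge (`a ↔ b`). -/
inductive Step (G : MixedGraph V) : V → V → Type _
  | fwd {a b : V} : G.dir a b → G.Step a b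
  | bwd {a b : V} : G.dir b a → G.Step a b
  | bi  {a b : V} : G.bi a b → G.Step a b

/-- The edge has an arrowhead at its second endpoint. -/
def Step.arrowAtEnd {G : MixedGraph V} : {a b : V} → G.Step a b → Prop
  | _, _, .fwd _ => True
  | _, _, .bwd _ => False
  | _, _, .bi _ => True

/-- The edge has an arrowhead at its first endpoint. -/
def Step.arrowAtStart {G : MixedGraph V} : {a b : V} → G.Step a b → Prop
  | _, _, .fwd _ => False
  | _, _, .bwd _ => True
  | _, _, .bi _ => True

/-- Paths (possibly self-intersecting) in a mixed graph. -/
inductive Walk (G : MixedGraph V) : V → V → Type _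
  | nil {a : V} : G.Walk a a
  | cons {a b c : V} : G.Step a b → G.Walk b c → G.Walk a c

namespace Walk

variable {G : MixedGraph V}

def length : {a b : V} → G.Walk a b → ℕ
  | _, _, .nil => 0
  | _, _, .cons _ w => w.length + 1

def verts : {a b : V} → G.Walk a b → List V
  | a, _, .nil => [a]
  | a, _, .cons _ w => a :: w.verts

/-- The intermediate vertices of a walk. -/
def interm {a b : V} (w : G.Walk a b) : List V := w.verts.tail.dropLast

def append : {a b c : V} → G.Walk a b → G.Walk b c → G.Walk a c
  | _, _, _, .nil, w' => w'
  | _, _, _, .cons s w, w' => .cons s (w.append w')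

/-- Every intermediate vertex of the walk is a collider. -/
def IsPureCollider : {a b : V} → G.Walk a b → Prop
  | _, _, .nil => True
  | _, _, .cons _ .nil => True
  | _, _, .cons s (.cons t w) =>
      s.arrowAtEnd ∧ t.arrowAtStart ∧ (Walk.cons t w).IsPureCollider

/-- The walk is m-connecting given `C`: every non-collider on it is outside `C`
and every collider on it is in `C`. -/
def IsMConnecting (C : Set V) : {a b : V} → G.Walk a b → Prop
  | _, _, .nil => True
  | _, _, .cons _ .nil => True
  | _, _, .cons (b := m) s (.cons t w) =>
      ((s.arrowAtEnd ∧ t.arrowAtStart) ↔ m ∈ C) ∧ (Walk.cons t w).IsMConnecting C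

end Walk

variable (G : MixedGraph V)

/-- `A` and `B` are m-separated given `C`: no m-connecting walk given `C`
between a vertex of `A` and a vertex of `B`. -/
def MSep (A B C : Set V) : Prop :=
  ∀ a ∈ A, ∀ b ∈ B, ∀ w : G.Walk a b, ¬ w.IsMConnecting C

/-- `u` and `v` are joined by a pure-collider path (with at least one edge). -/
def ColliderConn (u v : V) : Prop :=
  ∃ w : G.Walk u v, 0 < w.length ∧ w.IsPureCollider

/-- Vertices connected to `S` by a (possibly empty) path of bi-directed edges. -/
def district (S : Set V) : Set V :=
  {v | ∃ s ∈ S, Relation.ReflTransGen G.bi s v}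

/-- Children of vertices in `S`. -/
def ch (S : Set V) : Set V := {v | ∃ a ∈ S, G.dir a v}

/-- Ancestors of `S` (including `S` itself). -/
def an (S : Set V) : Set V :=
  {v | ∃ s ∈ S, Relation.ReflTransGen G.dir v s}

/-- The subgraph induced by `W`: edges with both endpoints in `W`. -/
def induce (W : Set V) : MixedGraph V where
  dir a b := G.dir a b ∧ a ∈ W ∧ b ∈ W
  bi a b := G.bi a b ∧ a ∈ W ∧ b ∈ W
  bi_symm h := ⟨G.bi_symm h.1, h.2.2, h.2.1⟩

/-- Separation in an undirected graph with adjacency `adj`: every path between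
`A` and `B` intersects `C`, i.e. `B` is not reachable from `A` avoiding `C`. -/
def UndirSep (adj : V → V → Prop) (A B C : Set V) : Prop :=
  ∀ a ∈ A, ∀ b ∈ B, ¬ Relation.ReflTransGen (fun x y => adj x y ∧ y ∉ C) a b

inductive EdgeKind | fwd | bwd | bi
deriving DecidableEq

def Step.kind {G : MixedGraph V} : {a b : V} → G.Step a b → EdgeKind
  | _, _, .fwd _ => .fwd
  | _, _, .bwd _ => .bwd
  | _, _, .bi _ => .bi

def Walk.kinds {G : MixedGraph V} : {a b : V} → G.Walk a b → List EdgeKind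
  | _, _, .nil => []
  | _, _, .cons s w => s.kind :: w.kinds

end MixedGraph

/-!
Every vertex of `B ∪ ch(B)` reaches `B` by a pure-collider walk with an arrowhead at its first
vertex (the empty walk, or `s ← b`). Prepending a bi-directed edge keeps both properties, so
they propagate along the bi-directed path to `c`; prepending `a → c` then makes `c` a collider.
-/

namespace MixedGraph

variable {V : Type*} {G : MixedGraph V}

namespace Walk

def ArrowAtStart : {a b : V} → G.Walk a b → Prop
  | _, _, .nil => True
  | _, _, .cons s _ => s.arrowAtStart

theorem IsPureCollider.cons {x y z : V} (s : G.Step x y) (hs : s.arrowAtEnd) {w : G.Walk y z}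
    (hw : w.IsPureCollider) (hw' : w.ArrowAtStart) : (Walk.cons s w).IsPureCollider := by
  cases w with
  | nil => trivial
  | cons t w => exact ⟨hs, hw', hw⟩

end Walk

theorem exists_pureCollider_arrowAtStart_of_reflTransGen_bi {s c b : V}
    (hsc : Relation.ReflTransGen G.bi s c) (w : G.Walk s b)
    (hw : w.IsPureCollider) (hw' : w.ArrowAtStart) :
    ∃ w' : G.Walk c b, w'.IsPureCollider ∧ w'.ArrowAtStart := by
  induction hsc with
  | refl => exact ⟨w, hw, hw'⟩
  | tail _ hxy ih =>
    obtain ⟨w', hw, hw'⟩ := ih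
    exact ⟨.cons (.bi (G.bi_symm hxy)) w', hw.cons (.bi (G.bi_symm hxy)) trivial hw', trivial⟩

theorem exists_pureCollider_arrowAtStart_of_mem_district {B : Set V} {c : V}
    (hc : c ∈ G.district (B ∪ G.ch B)) :
    ∃ b ∈ B, ∃ w : G.Walk c b, w.IsPureCollider ∧ w.ArrowAtStart := by
  obtain ⟨s, hs, hsc⟩ := hc
  rcases hs with hsB | ⟨b, hb, hbs⟩
  · exact ⟨s, hsB, exists_pureCollider_arrowAtStart_of_reflTransGen_bi hsc .nil trivial trivial⟩
  · exact ⟨b, hb, exists_pureCollider_arrowAtStart_of_reflTransGen_bi hsc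
      (.cons (.bwd hbs) .nil) trivial trivial⟩

end MixedGraph

theorem stmt_15_general {V : Type*} (G : MixedGraph V) (A B : Set V)
    {a c : V} (ha : a ∈ A) (hac : G.dir a c)
    (hdist : c ∈ G.district (B ∪ G.ch B)) :
    ∃ a' ∈ A, ∃ b ∈ B, ∃ w : G.Walk a' b, w.IsPureCollider := by
  obtain ⟨b, hb, w, hw, hw'⟩ := G.exists_pureCollider_arrowAtStart_of_mem_district hdist
  exact ⟨a, ha, b, hb, .cons (.fwd hac) w, hw.cons (.fwd hac) trivial hw'⟩

/-- If `a → c` with `a ∈ A`, `c ∉ A ∪ B`, and `c ∈ district(B ∪ ch(B))`, then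
`A` and `B` are connected by a pure-collider path. -/
theorem stmt_15 {V : Type*} (G : MixedGraph V) (A B : Set V) (hAB : Disjoint A B)
    {a c : V} (ha : a ∈ A) (hac : G.dir a c) (hc : c ∉ A ∪ B)
    (hdist : c ∈ G.district (B ∪ G.ch B)) :
    ∃ a' ∈ A, ∃ b ∈ B, ∃ w : G.Walk a' b, w.IsPureCollider :=
  stmt_15_general G A B ha hac hdist
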